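/- The average two-party von Neumann entropy of |M₄⟩ equals E₂(|M₄⟩) = 1 + (1/2)log₂ 3 ≈ 1.7925. -/

import Mathlib

open scoped BigOperators
open Polynomial

/-- ω = exp(2πi/3), a primitive third root of unity. -/
noncomputable def omega : ℂ := Complex.exp (2 * Real.pi * Complex.I / 3)

/-- The four-qubit state |M₄⟩, given by its amplitudes in the computational basis. -/
noncomputable def M4 : Fin 2 → Fin 2 → Fin 2 → Fin 2 → ℂ := fun a b c d =>
  (Real.sqrt 6 : ℂ)⁻¹ *
    ((if (a, b, c, d) = (0, 0, 1, 1) ∨ (a, b, c, d) = (1, 1, 0, 0) then 1 else 0)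
      + omega * (if (a, b, c, d) = (0, 1, 0, 1) ∨ (a, b, c, d) = (1, 0, 1, 0) then 1 else 0)
      + (starRingEnd ℂ) omega *
          (if (a, b, c, d) = (0, 1, 1, 0) ∨ (a, b, c, d) = (1, 0, 0, 1) then 1 else 0))

/-- Reduced density matrix on qubits A,B (tracing out C,D), sesquilinear in two states. -/
noncomputable def redAB (ψ φ : Fin 2 → Fin 2 → Fin 2 → Fin 2 → ℂ) :
    Matrix (Fin 2 × Fin 2) (Fin 2 × Fin 2) ℂ := fun p q =>
  ∑ c : Fin 2, ∑ d : Fin 2, ψ p.1 p.2 c d * (starRingEnd ℂ) (φ q.1 q.2 c d)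

/-- Reduced density matrix on qubits A,C (tracing out B,D). -/
noncomputable def redAC (ψ φ : Fin 2 → Fin 2 → Fin 2 → Fin 2 → ℂ) :
    Matrix (Fin 2 × Fin 2) (Fin 2 × Fin 2) ℂ := fun p q =>
  ∑ b : Fin 2, ∑ d : Fin 2, ψ p.1 b p.2 d * (starRingEnd ℂ) (φ q.1 b q.2 d)

/-- Reduced density matrix on qubits A,D (tracing out B,C). -/
noncomputable def redAD (ψ φ : Fin 2 → Fin 2 → Fin 2 → Fin 2 → ℂ) :
    Matrix (Fin 2 × Fin 2) (Fin 2 × Fin 2) ℂ := fun p q =>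
  ∑ b : Fin 2, ∑ c : Fin 2, ψ p.1 b c p.2 * (starRingEnd ℂ) (φ q.1 b c q.2)

noncomputable def rhoAB (ψ : Fin 2 → Fin 2 → Fin 2 → Fin 2 → ℂ) := redAB ψ ψ
noncomputable def rhoAC (ψ : Fin 2 → Fin 2 → Fin 2 → Fin 2 → ℂ) := redAC ψ ψ
noncomputable def rhoAD (ψ : Fin 2 → Fin 2 → Fin 2 → Fin 2 → ℂ) := redAD ψ ψ

/-- The von Neumann entropy (in bits) of a Hermitian matrix, computed from its
eigenvalues, with the convention 0·log₂ 0 = 0 (as `Real.logb 2 0 = 0`). -/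
noncomputable def vonNeumannEntropy {n : Type*} [Fintype n] [DecidableEq n]
    {ρ : Matrix n n ℂ} (hρ : ρ.IsHermitian) : ℝ :=
  -∑ i, hρ.eigenvalues i * Real.logb 2 (hρ.eigenvalues i)

/-!
Write a four-qubit state supported on weight-two strings as `x |AB|CD⟩ + y |AC|BD⟩ + z |AD|BC⟩`
(each term a pair of complementary basis strings). Its reduced state on AB is explicit in
`x, y, z`, and permuting the qubits B, C, D permutes `x, y, z`, so all three reductions of
`M₄` come out as the same matrix `ρ`. That `ρ` has trace 1 and satisfies
`(ρ - 1/6)(ρ - 1/2) = 0`, so its eigenvalues are `1/6, 1/6, 1/6, 1/2` and its entropy is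
`1/2 + (1/2) log₂ 6 = 1 + (1/2) log₂ 3`.
-/

open Finset Matrix Polynomial

lemma Matrix.IsHermitian.isRoot_eigenvalues_of_aeval_eq_zero {𝕜 n : Type*} [RCLike 𝕜]
    [Fintype n] [DecidableEq n] {A : Matrix n n 𝕜} (hA : A.IsHermitian) {p : ℝ[X]}
    (hp : aeval A p = 0) (i : n) : p.IsRoot (hA.eigenvalues i) := by
  have : Nonempty n := ⟨i⟩
  have h := spectrum.subset_polynomial_aeval A p ⟨_, hA.eigenvalues_mem_spectrum_real i, rfl⟩
  rwa [hp, spectrum.zero_eq, Set.mem_singleton_iff] at h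

lemma Finset.sum_comp_of_forall_eq_or_eq {ι α M : Type*} [Fintype ι] [DecidableEq α]
    [AddCommMonoid M] {u : ι → α} {a b : α} (h : ∀ i, u i = a ∨ u i = b) (f : α → M) :
    ∑ i, f (u i) = #{i | u i = a} • f a + #{i | u i ≠ a} • f b := by
  rw [← sum_filter_add_sum_filter_not univ (fun i => u i = a)]
  congr 1
  · rw [sum_congr rfl fun i hi => by rw [(mem_filter.mp hi).2], sum_const]
  · rw [sum_congr rfl fun i hi => by rw [(h i).resolve_left (mem_filter.mp hi).2], sum_const]

lemma vonNeumannEntropy_eq_of_aeval_eq_zero {n : Type*} [Fintype n] [DecidableEq n]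
    {ρ : Matrix n n ℂ} (hρ : ρ.IsHermitian) (hn : Fintype.card n = 4) (htr : ρ.trace = 1)
    (hann : aeval ρ ((X - C (1 / 6 : ℝ)) * (X - C (1 / 2))) = 0) :
    vonNeumannEntropy hρ = 1 + (1 / 2) * Real.logb 2 3 := by
  have hspec (i : n) : hρ.eigenvalues i = 1 / 6 ∨ hρ.eigenvalues i = 1 / 2 := by
    simpa [sub_eq_zero] using hρ.isRoot_eigenvalues_of_aeval_eq_zero hann i
  have hsum : ∑ i, hρ.eigenvalues i = 1 := by
    have h := hρ.trace_eq_sum_eigenvalues.symm.trans htr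
    rw [← RCLike.ofReal_sum] at h
    exact RCLike.ofReal_injective (h.trans RCLike.ofReal_one.symm)
  have hcount := Finset.sum_comp_of_forall_eq_or_eq hspec id
  simp only [id, nsmul_eq_mul, hsum] at hcount
  have hcard : (#{i | hρ.eigenvalues i = 1 / 6} : ℝ) + #{i | hρ.eigenvalues i ≠ 1 / 6} = 4 := by
    exact_mod_cast ((card_filter_add_card_filter_not _).trans card_univ).trans hn
  have hm : (#{i | hρ.eigenvalues i = 1 / 6} : ℝ) = 3 := by linarith
  have hk : (#{i | hρ.eigenvalues i ≠ 1 / 6} : ℝ) = 1 := by linarith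
  rw [vonNeumannEntropy, Finset.sum_comp_of_forall_eq_or_eq hspec (fun t => t * Real.logb 2 t),
    nsmul_eq_mul, nsmul_eq_mul, hm, hk, one_div, one_div, Real.logb_inv, Real.logb_inv,
    show (6 : ℝ) = 2 * 3 by norm_num, Real.logb_mul two_ne_zero three_ne_zero,
    Real.logb_self_eq_one one_lt_two]
  ring

lemma omega_mul_conj : omega * starRingEnd ℂ omega = 1 := by
  rw [Complex.mul_conj, Complex.normSq_eq_norm_sq]
  simp [omega, Complex.norm_exp]

lemma omega_add_conj : omega + starRingEnd ℂ omega = -1 := by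
  have hre : omega.re = -(1 / 2) := by
    rw [omega, show 2 * Real.pi * Complex.I / 3 = ((2 * Real.pi / 3 : ℝ) : ℂ) * Complex.I by
      push_cast; ring, Complex.exp_ofReal_mul_I_re,
      show 2 * Real.pi / 3 = Real.pi - Real.pi / 3 by ring, Real.cos_pi_sub, Real.cos_pi_div_three]
  rw [Complex.add_conj, hre]
  norm_num

lemma sqrt_six_inv_mul_conj :
    (Real.sqrt 6 : ℂ)⁻¹ * starRingEnd ℂ (Real.sqrt 6 : ℂ)⁻¹ = 1 / 6 := by
  rw [map_inv₀, Complex.conj_ofReal, ← mul_inv, ← Complex.ofReal_mul,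
    Real.mul_self_sqrt (by norm_num)]
  norm_num

/-- `x`, `y`, `z` are the amplitudes of the pairings AB|CD, AC|BD and AD|BC. -/
def pairingState (x y z : ℂ) : Fin 2 → Fin 2 → Fin 2 → Fin 2 → ℂ := fun a b c d =>
  x * (if (a, b, c, d) = (0, 0, 1, 1) ∨ (a, b, c, d) = (1, 1, 0, 0) then 1 else 0)
    + y * (if (a, b, c, d) = (0, 1, 0, 1) ∨ (a, b, c, d) = (1, 0, 1, 0) then 1 else 0)
    + z * (if (a, b, c, d) = (0, 1, 1, 0) ∨ (a, b, c, d) = (1, 0, 0, 1) then 1 else 0)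

def pairingReduced (α β γ : ℂ) : Matrix (Fin 2 × Fin 2) (Fin 2 × Fin 2) ℂ := fun p q =>
  if p = q then (if p.1 = p.2 then α else β) else if p.1 ≠ p.2 ∧ q.1 ≠ q.2 then γ else 0

lemma M4_eq_pairingState :
    M4 = pairingState (Real.sqrt 6 : ℂ)⁻¹ ((Real.sqrt 6 : ℂ)⁻¹ * omega)
      ((Real.sqrt 6 : ℂ)⁻¹ * starRingEnd ℂ omega) := by
  funext a b c d
  simp only [M4, pairingState]
  ring

lemma redAC_eq_redAB (ψ φ : Fin 2 → Fin 2 → Fin 2 → Fin 2 → ℂ) :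
    redAC ψ φ = redAB (fun a b c d => ψ a c b d) (fun a b c d => φ a c b d) :=
  rfl

lemma redAD_eq_redAB (ψ φ : Fin 2 → Fin 2 → Fin 2 → Fin 2 → ℂ) :
    redAD ψ φ = redAB (fun a b c d => ψ a c d b) (fun a b c d => φ a c d b) :=
  rfl

lemma pairingState_swap (x y z : ℂ) :
    (fun a b c d => pairingState x y z a c b d) = pairingState y x z := by
  funext a b c d
  fin_cases a <;> fin_cases b <;> fin_cases c <;> fin_cases d <;> simp [pairingState]

lemma pairingState_cycle (x y z : ℂ) :
    (fun a b c d => pairingState x y z a c d b) = pairingState z x y := by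
  funext a b c d
  fin_cases a <;> fin_cases b <;> fin_cases c <;> fin_cases d <;> simp [pairingState]

lemma redAB_pairingState (x y z : ℂ) :
    redAB (pairingState x y z) (pairingState x y z)
      = pairingReduced (x * starRingEnd ℂ x) (y * starRingEnd ℂ y + z * starRingEnd ℂ z)
          (y * starRingEnd ℂ z + z * starRingEnd ℂ y) := by
  ext ⟨a, b⟩ ⟨c, d⟩
  fin_cases a <;> fin_cases b <;> fin_cases c <;> fin_cases d <;>
    simp [redAB, pairingState, pairingReduced, Fin.sum_univ_two, Prod.ext_iff] <;> ring

lemma rhoAB_M4 : rhoAB M4 = pairingReduced (1 / 6) (1 / 3) (-(1 / 6)) := by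
  rw [rhoAB, M4_eq_pairingState, redAB_pairingState]
  have hs := sqrt_six_inv_mul_conj
  have hω_mul := omega_mul_conj
  have hω_add := omega_add_conj
  congr 1 <;> simp only [map_mul, Complex.conj_conj] <;> grind

lemma rhoAC_M4 : rhoAC M4 = pairingReduced (1 / 6) (1 / 3) (-(1 / 6)) := by
  rw [rhoAC, redAC_eq_redAB, M4_eq_pairingState, pairingState_swap, redAB_pairingState]
  have hs := sqrt_six_inv_mul_conj
  have hω_mul := omega_mul_conj
  have hω_add := omega_add_conj
  congr 1 <;> simp only [map_mul, Complex.conj_conj] <;> grind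

lemma rhoAD_M4 : rhoAD M4 = pairingReduced (1 / 6) (1 / 3) (-(1 / 6)) := by
  rw [rhoAD, redAD_eq_redAB, M4_eq_pairingState, pairingState_cycle, redAB_pairingState]
  have hs := sqrt_six_inv_mul_conj
  have hω_mul := omega_mul_conj
  have hω_add := omega_add_conj
  congr 1 <;> simp only [map_mul, Complex.conj_conj] <;> grind

lemma trace_pairingReduced (α β γ : ℂ) : (pairingReduced α β γ).trace = 2 * α + 2 * β := by
  simp only [trace, diag_apply, pairingReduced, if_true, Fintype.sum_prod_type, Fin.sum_univ_two,
    Fin.isValue, zero_ne_one, one_ne_zero, if_false]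
  ring

lemma aeval_pairingReduced :
    aeval (pairingReduced (1 / 6) (1 / 3) (-(1 / 6)))
      ((X - C (1 / 6 : ℝ)) * (X - C (1 / 2))) = 0 := by
  ext ⟨a, b⟩ ⟨c, d⟩
  fin_cases a <;> fin_cases b <;> fin_cases c <;> fin_cases d <;>
    simp [pairingReduced, Matrix.mul_apply, Fintype.sum_prod_type, Fin.sum_univ_two,
      Matrix.algebraMap_matrix_apply, Prod.ext_iff] <;> norm_num

/-- The average two-party von Neumann entropy of |M₄⟩ equals 1 + (1/2)·log₂ 3. -/
theorem M4_average_entropy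
    (h1 : (rhoAB M4).IsHermitian) (h2 : (rhoAC M4).IsHermitian)
    (h3 : (rhoAD M4).IsHermitian) :
    (1/3 : ℝ) * (vonNeumannEntropy h1 + vonNeumannEntropy h2 + vonNeumannEntropy h3)
      = 1 + (1/2) * Real.logb 2 3 := by
  have entropy_eq {ρ : Matrix (Fin 2 × Fin 2) (Fin 2 × Fin 2) ℂ} (hρ : ρ.IsHermitian)
      (h : ρ = pairingReduced (1 / 6) (1 / 3) (-(1 / 6))) :
      vonNeumannEntropy hρ = 1 + (1 / 2) * Real.logb 2 3 := by
    subst h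
    refine vonNeumannEntropy_eq_of_aeval_eq_zero hρ rfl ?_ aeval_pairingReduced
    rw [trace_pairingReduced]
    norm_num
  rw [entropy_eq h1 rhoAB_M4, entropy_eq h2 rhoAC_M4, entropy_eq h3 rhoAD_M4]
  ring
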